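/- Sampling on ℤ (sufficient condition via graph estimates): Let S = kℤ with k = 2n+1 odd, and let f ∈ ℓ²(ℤ) satisfy ‖∇ f‖₂ ≤ ε ‖f‖₂ with ε √(n(n+1)/2) < 1, where ‖∇ f‖₂² = 2∑_{m∈ℤ} |f(m+1) − f(m)|². Then (1 − ε √(n(n+1)/2)) / √k · ‖f‖₂ ≤ ‖f|_S‖₂ ≤ ‖f‖₂. -/

import Mathlib

/-!
Split `ℤ` into the `k = 2n+1` cosets `kℤ + j`, `|j| ≤ n`, and let `N j` be the `ℓ²`-norm of `f`
on `kℤ + j`. Moving from one coset to the next changes `N` by at most the `ℓ²`-norm `g j` of the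
increments of `f` on that coset, and `∑ g j ^ 2 = ‖∇f‖₂² / 2`; by Cauchy–Schwarz along the path
from `0` to `j`, `N j ≤ N 0 + √(|j| · ‖∇f‖₂² / 2)`. Minkowski in `ℝ^k` and `∑ |j| = n (n + 1)` give
`‖f‖₂ = ‖(N j)ⱼ‖ ≤ √k · N 0 + √(n(n+1)/2) · ‖∇f‖₂ ≤ √k · ‖f|_S‖₂ + ε √(n(n+1)/2) · ‖f‖₂`.
-/

open Finset

/-- Junk value `0` when `u` is not square-summable. -/
noncomputable def l2Norm {ι E : Type*} [Norm E] (u : ι → E) : ℝ := √(∑' i, ‖u i‖ ^ 2)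

section L2

variable {ι E : Type*} [NormedAddCommGroup E]

lemma l2Norm_nonneg (u : ι → E) : 0 ≤ l2Norm u := Real.sqrt_nonneg _

lemma sq_l2Norm (u : ι → E) : l2Norm u ^ 2 = ∑' i, ‖u i‖ ^ 2 :=
  Real.sq_sqrt (tsum_nonneg fun _ => by positivity)

lemma memℓp_two_of_summable_sq {u : ι → E} (hu : Summable fun i => ‖u i‖ ^ 2) : Memℓp u 2 :=
  (memℓp_gen_iff (by norm_num)).2 (by simpa using hu)

lemma l2Norm_coe_lp (u : lp (fun _ : ι => E) 2) : l2Norm ⇑u = ‖u‖ := by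
  rw [lp.norm_eq_tsum_rpow (by norm_num), l2Norm, Real.sqrt_eq_rpow]
  simp

theorem abs_l2Norm_sub_l2Norm_le {u v : ι → E} (hu : Summable fun i => ‖u i‖ ^ 2)
    (hv : Summable fun i => ‖v i‖ ^ 2) : |l2Norm u - l2Norm v| ≤ l2Norm (u - v) := by
  let U : lp (fun _ : ι => E) 2 := ⟨u, memℓp_two_of_summable_sq hu⟩
  let V : lp (fun _ : ι => E) 2 := ⟨v, memℓp_two_of_summable_sq hv⟩
  have h := abs_norm_sub_norm_le U V
  rwa [← l2Norm_coe_lp, ← l2Norm_coe_lp, ← l2Norm_coe_lp, lp.coeFn_sub] at h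

theorem sqrt_sum_add_sq_le (s : Finset ι) (u v : ι → ℝ) :
    √(∑ i ∈ s, (u i + v i) ^ 2) ≤ √(∑ i ∈ s, u i ^ 2) + √(∑ i ∈ s, v i ^ 2) := by
  have h := abs_l2Norm_sub_l2Norm_le (u := fun i : s => u i + v i) (v := fun i : s => u i)
    .of_finite .of_finite
  simp only [l2Norm, Pi.sub_apply, add_sub_cancel_left, Real.norm_eq_abs, sq_abs,
    Finset.tsum_subtype s (fun i => (u i + v i) ^ 2), Finset.tsum_subtype s (fun i => u i ^ 2),
    Finset.tsum_subtype s (fun i => v i ^ 2)] at h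
  linarith [le_abs_self (√(∑ i ∈ s, (u i + v i) ^ 2) - √(∑ i ∈ s, u i ^ 2))]

end L2

def Int.icoProdEquiv {k : ℤ} (hk : 0 < k) (c : ℤ) : Ico c (c + k) × ℤ ≃ ℤ where
  toFun p := k * p.2 + p.1
  invFun m := (⟨c + (m - c) % k, by
    have := Int.emod_nonneg (m - c) hk.ne'
    have := Int.emod_lt_of_pos (m - c) hk
    rw [mem_Ico]; omega⟩, (m - c) / k)
  left_inv := by
    rintro ⟨⟨j, hj⟩, l⟩
    rw [mem_Ico] at hj
    obtain ⟨hq, hr⟩ := (Int.ediv_emod_unique hk).2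
      (⟨by ring, by omega, by omega⟩ : (j - c) + k * l = k * l + j - c ∧ 0 ≤ j - c ∧ j - c < k)
    simp only [hq, hr, add_sub_cancel]
  right_inv m := by
    have := Int.mul_ediv_add_emod (m - c) k
    simp only
    linarith

theorem tsum_eq_sum_Ico_tsum_mul_add {E : Type*} [NormedAddCommGroup E] [CompleteSpace E]
    {k : ℤ} (hk : 0 < k) (c : ℤ) {a : ℤ → E} (ha : Summable a) :
    ∑' m, a m = ∑ j ∈ Ico c (c + k), ∑' l, a (k * l + j) := by
  have hp : Summable fun p => a (Int.icoProdEquiv hk c p) := (Equiv.summable_iff _).2 ha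
  rw [← (Int.icoProdEquiv hk c).tsum_eq, hp.tsum_prod' hp.prod_factor, ← Finset.tsum_subtype]
  rfl

theorem sq_l2Norm_eq_sum_Ico {E : Type*} [NormedAddCommGroup E] {k : ℤ} (hk : 0 < k) (c : ℤ)
    {u : ℤ → E} (hu : Summable fun m => ‖u m‖ ^ 2) :
    l2Norm u ^ 2 = ∑ j ∈ Ico c (c + k), l2Norm (fun l => u (k * l + j)) ^ 2 := by
  simp only [sq_l2Norm]
  exact tsum_eq_sum_Ico_tsum_mul_add hk c hu

theorem abs_l2Norm_residue_succ_sub_le {E : Type*} [NormedAddCommGroup E] {k : ℤ} (hk : k ≠ 0)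
    {u : ℤ → E} (hu : Summable fun m => ‖u m‖ ^ 2) (c : ℤ) :
    |l2Norm (fun l => u (k * l + (c + 1))) - l2Norm (fun l => u (k * l + c))| ≤
      l2Norm (fun l => u (k * l + c + 1) - u (k * l + c)) := by
  have hinj (c : ℤ) : Function.Injective fun l : ℤ => k * l + c := fun l l' h => by
    simpa [hk] using h
  simpa only [← add_assoc, Pi.sub_def] using abs_l2Norm_sub_l2Norm_le
    (hu.comp_injective (hinj (c + 1))) (hu.comp_injective (hinj c))

theorem abs_sub_le_sum_Ico {N g : ℤ → ℝ} (h : ∀ c, |N (c + 1) - N c| ≤ g c) {a b : ℤ}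
    (hab : a ≤ b) : |N b - N a| ≤ ∑ i ∈ Ico a b, g i := by
  induction b, hab using Int.leInduction with
  | base => simp
  | succ b hab ih =>
    rw [Ico_add_one_right_eq_Icc, sum_Icc_eq_sum_Ico_add _ hab]
    linarith [abs_sub_le (N (b + 1)) (N b) (N a), h b]

theorem abs_sub_le_sqrt_mul_sum_sq {N g : ℤ → ℝ} (h : ∀ c, |N (c + 1) - N c| ≤ g c) {a b : ℤ}
    (hab : a ≤ b) : |N b - N a| ≤ √((b - a : ℤ) * ∑ i ∈ Ico a b, g i ^ 2) := by
  have hsum := abs_sub_le_sum_Ico h hab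
  have hcard : (#(Ico a b) : ℝ) = (b - a : ℤ) := by
    rw [Int.card_Ico]; exact_mod_cast Int.toNat_of_nonneg (by omega)
  calc |N b - N a| ≤ ∑ i ∈ Ico a b, g i := hsum
    _ = √((∑ i ∈ Ico a b, g i) ^ 2) := (Real.sqrt_sq ((abs_nonneg _).trans hsum)).symm
    _ ≤ √((b - a : ℤ) * ∑ i ∈ Ico a b, g i ^ 2) :=
      Real.sqrt_le_sqrt (hcard ▸ sq_sum_le_card_mul_sum_sq)

theorem le_add_sqrt_abs_mul_sum_sq {N g : ℤ → ℝ} (h : ∀ c, |N (c + 1) - N c| ≤ g c) (n : ℕ)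
    {j : ℤ} (hj : j ∈ Icc (-n : ℤ) n) :
    N j ≤ N 0 + √(|(j : ℝ)| * ∑ i ∈ Icc (-n : ℤ) n, g i ^ 2) := by
  rw [mem_Icc] at hj
  have hsub {a b : ℤ} (ha : -n ≤ a) (hb : b ≤ n) :
      √(|(j : ℝ)| * ∑ i ∈ Ico a b, g i ^ 2) ≤ √(|(j : ℝ)| * ∑ i ∈ Icc (-n : ℤ) n, g i ^ 2) :=
    Real.sqrt_le_sqrt <| mul_le_mul_of_nonneg_left
      (sum_le_sum_of_subset_of_nonneg (fun i => by simp only [mem_Ico, mem_Icc]; omega)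
        fun _ _ _ => sq_nonneg _) (abs_nonneg _)
  rcases le_total 0 j with hj0 | hj0
  · have hN := abs_sub_le_sqrt_mul_sum_sq h hj0
    rw [sub_zero, ← abs_of_nonneg (Int.cast_nonneg hj0)] at hN
    linarith [le_abs_self (N j - N 0), hsub (a := 0) (by omega) hj.2]
  · have hN := abs_sub_le_sqrt_mul_sum_sq h hj0
    rw [zero_sub, Int.cast_neg, ← abs_of_nonpos (Int.cast_nonpos.2 hj0), abs_sub_comm] at hN
    linarith [le_abs_self (N j - N 0), hsub (b := 0) hj.1 (by omega)]

theorem sum_Icc_abs (n : ℕ) : ∑ j ∈ Icc (-n : ℤ) n, |(j : ℝ)| = n * (n + 1) := by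
  rw [sum_Icc_of_even_eq_range (f := fun j : ℤ => |(j : ℝ)|) (fun j => by simp)]
  have gauss := sum_range_id_mul_two (n + 1)
  rw [Nat.add_sub_cancel] at gauss
  simp only [Int.cast_natCast, Nat.abs_cast, Int.cast_zero, abs_zero, sub_zero, two_smul]
  rw [← Nat.cast_sum]
  norm_cast
  linarith

theorem sqrt_sum_sq_le_of_le_add_sqrt_abs_mul (n : ℕ) {N : ℤ → ℝ} {G : ℝ} (hG : 0 ≤ G)
    (hN : ∀ j, 0 ≤ N j) (h : ∀ j ∈ Icc (-n : ℤ) n, N j ≤ N 0 + √(|(j : ℝ)| * G)) :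
    √(∑ j ∈ Icc (-n : ℤ) n, N j ^ 2) ≤ √(2 * n + 1) * N 0 + √(n * (n + 1) * G) := by
  have hcard : (#(Icc (-n : ℤ) n) : ℝ) = 2 * n + 1 := by
    rw [Int.card_Icc, show (n + 1 - -n : ℤ) = ((2 * n + 1 : ℕ) : ℤ) by push_cast; ring,
      Int.toNat_natCast]
    push_cast; ring
  calc √(∑ j ∈ Icc (-n : ℤ) n, N j ^ 2)
      ≤ √(∑ j ∈ Icc (-n : ℤ) n, (N 0 + √(|(j : ℝ)| * G)) ^ 2) :=
        Real.sqrt_le_sqrt <| sum_le_sum fun j hj => pow_le_pow_left₀ (hN j) (h j hj) 2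
    _ ≤ √(∑ j ∈ Icc (-n : ℤ) n, N 0 ^ 2) + √(∑ j ∈ Icc (-n : ℤ) n, √(|(j : ℝ)| * G) ^ 2) :=
        sqrt_sum_add_sq_le _ _ _
    _ = √(2 * n + 1) * N 0 + √(n * (n + 1) * G) := by
        rw [sum_const, nsmul_eq_mul, hcard, Real.sqrt_mul (by positivity), Real.sqrt_sq (hN 0)]
        simp only [Real.sq_sqrt (mul_nonneg (abs_nonneg _) hG)]
        rw [← sum_mul, sum_Icc_abs]

theorem l2Norm_comp_mul_le {E : Type*} [NormedAddCommGroup E] {k : ℤ} (hk : k ≠ 0) {f : ℤ → E}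
    (hf : Summable fun m => ‖f m‖ ^ 2) : l2Norm (fun l => f (k * l)) ≤ l2Norm f :=
  Real.sqrt_le_sqrt <|
    tsum_comp_le_tsum_of_inj hf (fun _ => by positivity) (mul_right_injective₀ hk)

theorem l2Norm_le_sqrt_mul_l2Norm_comp_mul_add {E : Type*} [NormedAddCommGroup E] (n : ℕ)
    {f : ℤ → E} (hf : Summable fun m => ‖f m‖ ^ 2)
    (hgrad : Summable fun m => ‖f (m + 1) - f m‖ ^ 2) :
    l2Norm f ≤ √(2 * n + 1) * l2Norm (fun l => f ((2 * n + 1) * l)) +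
      √(n * (n + 1) / 2) * √(2 * ∑' m, ‖f (m + 1) - f m‖ ^ 2) := by
  set k : ℤ := 2 * n + 1
  have hk : 0 < k := by positivity
  set N : ℤ → ℝ := fun j => l2Norm fun l => f (k * l + j)
  set g : ℤ → ℝ := fun j => l2Norm fun l => f (k * l + j + 1) - f (k * l + j)
  have window : Ico (-n : ℤ) (-n + k) = Icc (-n : ℤ) n := by
    rw [show -(n : ℤ) + k = n + 1 by ring, Ico_add_one_right_eq_Icc]
  have hT : l2Norm f ^ 2 = ∑ j ∈ Icc (-n : ℤ) n, N j ^ 2 :=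
    window ▸ sq_l2Norm_eq_sum_Ico hk (-n) hf
  have hG : l2Norm (fun m => f (m + 1) - f m) ^ 2 = ∑ j ∈ Icc (-n : ℤ) n, g j ^ 2 :=
    window ▸ sq_l2Norm_eq_sum_Ico hk (-n) hgrad
  have hN : ∀ j ∈ Icc (-n : ℤ) n,
      N j ≤ N 0 + √(|(j : ℝ)| * l2Norm (fun m => f (m + 1) - f m) ^ 2) :=
    hG ▸ fun j => le_add_sqrt_abs_mul_sum_sq (abs_l2Norm_residue_succ_sub_le hk.ne' hf) n
  calc l2Norm f = √(∑ j ∈ Icc (-n : ℤ) n, N j ^ 2) := by rw [← hT, Real.sqrt_sq (l2Norm_nonneg _)]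
    _ ≤ √(2 * n + 1) * N 0 + √(n * (n + 1) * l2Norm (fun m => f (m + 1) - f m) ^ 2) :=
      sqrt_sum_sq_le_of_le_add_sqrt_abs_mul n (by positivity) (fun _ => l2Norm_nonneg _) hN
    _ = _ := by
      rw [sq_l2Norm, ← Real.sqrt_mul (by positivity)]
      simp only [N, add_zero]
      ring_nf

theorem statement19_general (n : ℕ) (k : ℤ) (hk : k = 2 * n + 1)
    (f : ℤ → ℂ) (hf2 : Summable fun m : ℤ => ‖f m‖ ^ 2)
    (hgrad2 : Summable fun m : ℤ => ‖f (m + 1) - f m‖ ^ 2)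
    (ε : ℝ)
    (hBern : Real.sqrt (2 * ∑' m : ℤ, ‖f (m + 1) - f m‖ ^ 2) ≤
      ε * Real.sqrt (∑' m : ℤ, ‖f m‖ ^ 2)) :
    (1 - ε * Real.sqrt (n * (n + 1) / 2)) / Real.sqrt (2 * n + 1) *
        Real.sqrt (∑' m : ℤ, ‖f m‖ ^ 2) ≤
      Real.sqrt (∑' l : ℤ, ‖f (k * l)‖ ^ 2) ∧
    Real.sqrt (∑' l : ℤ, ‖f (k * l)‖ ^ 2) ≤
      Real.sqrt (∑' m : ℤ, ‖f m‖ ^ 2) := by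
  subst hk
  refine ⟨?_, l2Norm_comp_mul_le (by omega) hf2⟩
  have hsplit := l2Norm_le_sqrt_mul_l2Norm_comp_mul_add n hf2 hgrad2
  have hgrad := mul_le_mul_of_nonneg_left hBern (Real.sqrt_nonneg (n * (n + 1) / 2))
  unfold l2Norm at hsplit
  rw [div_mul_eq_mul_div, div_le_iff₀ (by positivity)]
  linarith

/-- sampling on `ℤ` via graph estimates. Let `S = kℤ`, `k = 2n+1` odd.
If `f ∈ ℓ²(ℤ)` satisfies `‖∇f‖₂ ≤ ε ‖f‖₂` with `ε √(n(n+1)/2) < 1`, then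
`(1 − ε √(n(n+1)/2))/√k ⬝ ‖f‖₂ ≤ ‖f|_S‖₂ ≤ ‖f‖₂`. -/
theorem statement19 (n : ℕ) (hn : 1 ≤ n) (k : ℤ) (hk : k = 2 * n + 1)
    (f : ℤ → ℂ) (hf2 : Summable fun m : ℤ => ‖f m‖ ^ 2)
    (hgrad2 : Summable fun m : ℤ => ‖f (m + 1) - f m‖ ^ 2)
    (ε : ℝ) (hε : 0 ≤ ε)
    (hBern : Real.sqrt (2 * ∑' m : ℤ, ‖f (m + 1) - f m‖ ^ 2) ≤
      ε * Real.sqrt (∑' m : ℤ, ‖f m‖ ^ 2))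
    (hεδ : ε * Real.sqrt (n * (n + 1) / 2) < 1) :
    (1 - ε * Real.sqrt (n * (n + 1) / 2)) / Real.sqrt (2 * n + 1) *
        Real.sqrt (∑' m : ℤ, ‖f m‖ ^ 2) ≤
      Real.sqrt (∑' l : ℤ, ‖f (k * l)‖ ^ 2) ∧
    Real.sqrt (∑' l : ℤ, ‖f (k * l)‖ ^ 2) ≤
      Real.sqrt (∑' m : ℤ, ‖f m‖ ^ 2) :=
  statement19_general n k hk f hf2 hgrad2 ε hBern
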